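/- Suppose a simulated likelihood p_S(y|θ, u) is an unbiased estimator of the true likelihood, i.e. ∫ p_S(y|θ, u) p(u) du = p(y|θ) for every θ, where p(u) is a density not depending on θ. Then the θ-marginal of the extended posterior p_S(θ, u|y) ∝ p_S(y|θ, u) p(θ) p(u) equals the true posterior p(θ|y) ∝ p(y|θ) p(θ): that is, ∫ p_S(θ, u|y) du = p(θ|y). -/

import Mathlib

open MeasureTheory

theorem extended_posterior_marginal_general {Θ U : Type*} [MeasurableSpace U]
    (νU : Measure U)
    (pS : Θ → U → ℝ) (pθ : Θ → ℝ) (pu : U → ℝ) (L : Θ → ℝ) (py : ℝ)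
    (hunbiased : ∀ θ, ∫ u, pS θ u * pu u ∂νU = L θ) :
    ∀ θ, ∫ u, pS θ u * pθ θ * pu u / py ∂νU = L θ * pθ θ / py := by
  intro θ
  calc ∫ u, pS θ u * pθ θ * pu u / py ∂νU
      = ∫ u, pθ θ / py * (pS θ u * pu u) ∂νU := by congr 1; ext u; ring
    _ = pθ θ / py * L θ := by rw [integral_const_mul, hunbiased θ]
    _ = L θ * pθ θ / py := by ring

/-- If the simulated likelihood is unbiased, the θ-marginal of the extended posterior
p_S(θ,u|y) ∝ p_S(y|θ,u)p(θ)p(u) equals the true posterior p(θ|y) ∝ p(y|θ)p(θ). -/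
theorem extended_posterior_marginal {Θ U : Type*} [MeasurableSpace Θ] [MeasurableSpace U]
    (νΘ : Measure Θ) (νU : Measure U)
    (pS : Θ → U → ℝ) (pθ : Θ → ℝ) (pu : U → ℝ) (L : Θ → ℝ) (py : ℝ)
    (hpS0 : ∀ θ u, 0 ≤ pS θ u) (hpθ0 : ∀ θ, 0 ≤ pθ θ) (hpu0 : ∀ u, 0 ≤ pu u)
    (hunbiased : ∀ θ, ∫ u, pS θ u * pu u ∂νU = L θ)
    (hint : ∀ θ, Integrable (fun u => pS θ u * pu u) νU)
    (hpy : py = ∫ θ, L θ * pθ θ ∂νΘ) (hpypos : 0 < py) :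
    ∀ θ, ∫ u, pS θ u * pθ θ * pu u / py ∂νU = L θ * pθ θ / py :=
  extended_posterior_marginal_general νU pS pθ pu L py hunbiased
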